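/- For all (c₁,c₂) ∈ ℝ² and all z ∈ ℂ, D₂(c₁,c₂;z) = (z − α₁(c₁,c₂))(z − α₂(c₁,c₂))(z − α₃(c₁,c₂))(z − α₄(c₁,c₂)); that is, the roots of D₂(c₁,c₂;·), counted with multiplicity, are exactly α₁(c₁,c₂), α₂(c₁,c₂), α₃(c₁,c₂), α₄(c₁,c₂). -/

import Mathlib

/-!
With `w = (2z - 3)²` the quartic is biquadratic: `16 D₂(c₁,c₂;z) = w² - 2(5 - 4c₁) w + 9 + 24c₁ + 16c₂`,
whose reduced discriminant is `16 (1 - 4c₁ + c₁² - c₂)`. Hence the factorisation holds for *any* choice of the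
three square roots involved, in particular for the principal ones.
-/

noncomputable section

/-- The principal branch of the complex square root:
`√z = √r·e^{iφ/2}` for `z = r·e^{iφ}` with `r > 0` and `-π < φ ≤ π`. -/
def csqrt (z : ℂ) : ℂ := z ^ (1/2 : ℂ)

/-- `α₁(c₁,c₂) = 3/2 - (1/2)√(5-4c₁+4√(1-4c₁+c₁²-c₂))`. -/
def alpha1 (c₁ c₂ : ℝ) : ℂ :=
  3/2 - (1/2) * csqrt (5 - 4 * (c₁ : ℂ) + 4 * csqrt (1 - 4 * (c₁ : ℂ) + (c₁ : ℂ) ^ 2 - (c₂ : ℂ)))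

/-- `α₂(c₁,c₂) = 3/2 - (1/2)√(5-4c₁-4√(1-4c₁+c₁²-c₂))`. -/
def alpha2 (c₁ c₂ : ℝ) : ℂ :=
  3/2 - (1/2) * csqrt (5 - 4 * (c₁ : ℂ) - 4 * csqrt (1 - 4 * (c₁ : ℂ) + (c₁ : ℂ) ^ 2 - (c₂ : ℂ)))

/-- `α₃(c₁,c₂) = 3/2 + (1/2)√(5-4c₁-4√(1-4c₁+c₁²-c₂))`. -/
def alpha3 (c₁ c₂ : ℝ) : ℂ :=
  3/2 + (1/2) * csqrt (5 - 4 * (c₁ : ℂ) - 4 * csqrt (1 - 4 * (c₁ : ℂ) + (c₁ : ℂ) ^ 2 - (c₂ : ℂ)))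

/-- `α₄(c₁,c₂) = 3/2 + (1/2)√(5-4c₁+4√(1-4c₁+c₁²-c₂))`. -/
def alpha4 (c₁ c₂ : ℝ) : ℂ :=
  3/2 + (1/2) * csqrt (5 - 4 * (c₁ : ℂ) + 4 * csqrt (1 - 4 * (c₁ : ℂ) + (c₁ : ℂ) ^ 2 - (c₂ : ℂ)))

/-- The quartic polynomial `D₂(c₁,c₂;z) = z(z-1)(z-2)(z-3) + c₁[z(z-1)+(z-2)(z-3)] + c₂`. -/
def D2 (c₁ c₂ : ℝ) (z : ℂ) : ℂ :=
  z * (z - 1) * (z - 2) * (z - 3) + (c₁ : ℂ) * (z * (z - 1) + (z - 2) * (z - 3)) + (c₂ : ℂ)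

theorem csqrt_sq (z : ℂ) : csqrt z ^ 2 = z := by
  simp [csqrt, one_div]

theorem D2_eq_prod_of_sq_eq (c₁ c₂ : ℝ) (z s t₁ t₂ : ℂ)
    (hs : s ^ 2 = 1 - 4 * (c₁ : ℂ) + (c₁ : ℂ) ^ 2 - (c₂ : ℂ))
    (ht₁ : t₁ ^ 2 = 5 - 4 * (c₁ : ℂ) + 4 * s) (ht₂ : t₂ ^ 2 = 5 - 4 * (c₁ : ℂ) - 4 * s) :
    D2 c₁ c₂ z =
      (z - (3/2 - (1/2) * t₁)) * (z - (3/2 - (1/2) * t₂)) *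
        (z - (3/2 + (1/2) * t₂)) * (z - (3/2 + (1/2) * t₁)) := by
  unfold D2
  linear_combination hs + ((z - 3/2) ^ 2 - (5 - 4 * (c₁ : ℂ) - 4 * s) / 4) / 4 * ht₁ +
    ((z - 3/2) ^ 2 - t₁ ^ 2 / 4) / 4 * ht₂

theorem stmt4 (c₁ c₂ : ℝ) (z : ℂ) :
    D2 c₁ c₂ z =
      (z - alpha1 c₁ c₂) * (z - alpha2 c₁ c₂) * (z - alpha3 c₁ c₂) * (z - alpha4 c₁ c₂) :=
  D2_eq_prod_of_sq_eq c₁ c₂ z _ _ _ (csqrt_sq _) (csqrt_sq _) (csqrt_sq _)
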